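/- In a finitely complete category with an exponentiable map p : E ⟶ B, pushing forward the first leg of the generic composite GenComp(p', p) along its second leg (i.e., along π^*π_*(E × B') ⟶ π_*(E × B')) yields the same morphism p_*(E × E') ⟶ p_*(E × B') as applying the polynomial functor P_p (the composite of E × −, pushforward p_*, and forgetting to C) to the map E' ⟶ B'. (This is an instance of the distributivity/Beck–Chevalley law for pushforwards.) -/

import Mathlib

/-!
Write `Q = p_*(E × B')`, `π : p^*Q ⟶ Q` and `ε : p^*Q ⟶ E × B'` for the counit. By pasting
pullbacks, `π^*` is `p^*` read on iterated slices, so `Σ_ε π^*` is the left adjoint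
`a ↦ ε ∘ p^*a` of `p_*` on the slices over `Q` and over `E × B'`. Uniqueness of adjoints then
gives `Π_π ε^* ≅ p_*` on these slices (distributivity). The first leg of the generic composite is
`ε^*` of `E × E' ⟶ E × B'`, because `E × E'` is the pullback of `p'` along the projection, and
`p_*` of that map is `P_p(p')`.
-/

open CategoryTheory CategoryTheory.Limits

noncomputable section

variable {C : Type*} [Category C] [HasFiniteLimits C]

/-- The pushforward `p_*(E × B')` of the product projection, as an object of `C/B`. -/
def genQ {E B : C} (p : E ⟶ B) [(Over.pullback p).IsLeftAdjoint] (B' : C) : Over B :=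
  (Over.pullback p).rightAdjoint.obj (Over.mk (prod.fst : E ⨯ B' ⟶ E))

/-- The counit `ev : p^*p_*(E × B') ⟶ E × B'` of the pullback–pushforward adjunction. -/
def genCounit {E B : C} (p : E ⟶ B) [(Over.pullback p).IsLeftAdjoint] (B' : C) :
    (Over.pullback p).obj (genQ p B') ⟶ Over.mk (prod.fst : E ⨯ B' ⟶ E) :=
  (Adjunction.ofIsLeftAdjoint (Over.pullback p)).counit.app _

/-- The composite `p^*p_*(E × B') ⟶ E × B' ⟶ B'`. -/
def evBase {E B : C} (p : E ⟶ B) [(Over.pullback p).IsLeftAdjoint] (B' : C) :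
    pullback (genQ p B').hom p ⟶ B' :=
  (genCounit p B').left ≫ (prod.snd : E ⨯ B' ⟶ B')

namespace CategoryTheory.Over

variable {𝒞 : Type*} [Category 𝒞]

def iteratedSliceBackwardObjMkIso {X : 𝒞} {U Z : Over X} (f : U ⟶ Z) :
    Z.iteratedSliceBackward.obj (Over.mk f.left) ≅ Over.mk f :=
  Over.isoMk (Over.isoMk (Iso.refl _) (by dsimp [Over.iteratedSliceBackward]; simp))
    (by ext; exact Category.id_comp _)

def pullbackSndObjIsoProdMap [HasPullbacks 𝒞] [HasBinaryProducts 𝒞] {X Y : 𝒞} (f : X ⟶ Y)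
    (A : 𝒞) :
    (Over.pullback (prod.snd : A ⨯ Y ⟶ Y)).obj (Over.mk f) ≅ Over.mk (prod.map (𝟙 A) f) :=
  Over.isoMk (pullbackSymmetry _ _ ≪≫ pullbackProdSndIsoProd f A) (by
    dsimp
    apply prod.hom_ext <;> simp [pullback.condition])

variable [HasPullbacks 𝒞]

def mapFstIsoIteratedSlicePost {E B : 𝒞} (f : Over B) (p : E ⟶ B) :
    Over.map (pullback.fst f.hom p) ≅
      ((Over.pullback p).obj f).iteratedSliceBackward ⋙
        (Over.post (Over.map p) ⋙ Over.map ((Over.mapPullbackAdj p).counit.app f)) ⋙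
          f.iteratedSliceForward :=
  NatIso.ofComponents
    (fun g => Over.isoMk (Iso.refl _) (by
      dsimp [Over.iteratedSliceForward, Over.iteratedSliceBackward, Over.post]
      simp))
    (fun _ => by ext; exact (Category.comp_id _).trans (Category.id_comp _).symm)

-- Conjugating the left adjoints avoids computing pullbacks: there the components are identities.
def pullbackFstIsoIteratedSlicePost {E B : 𝒞} (f : Over B) (p : E ⟶ B) :
    Over.pullback (pullback.fst f.hom p) ≅
      f.iteratedSliceBackward ⋙ Over.post (Over.pullback p) ⋙
        ((Over.pullback p).obj f).iteratedSliceForward :=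
  conjugateIsoEquiv (Over.mapPullbackAdj _)
    (((Over.pullback p).obj f).iteratedSliceEquiv.symm.toAdjunction.comp
      ((Over.postAdjunctionRight (Over.mapPullbackAdj p)).comp
        f.iteratedSliceEquiv.toAdjunction))
    (mapFstIsoIteratedSlicePost f p).symm

def pullbackFstMapCounitAdj {E B : 𝒞} {p : E ⟶ B} {R : Over E ⥤ Over B}
    (a : Over.pullback p ⊣ R) (Z : Over E) :
    Over.pullback (pullback.fst (R.obj Z).hom p) ⋙ Over.map (a.counit.app Z).left ⊣
      Z.iteratedSliceBackward ⋙ Over.post R ⋙ (R.obj Z).iteratedSliceForward :=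
  ((R.obj Z).iteratedSliceEquiv.symm.toAdjunction.comp
    ((Over.postAdjunctionRight a).comp Z.iteratedSliceEquiv.toAdjunction)).ofNatIsoLeft
    (Functor.isoWhiskerRight (pullbackFstIsoIteratedSlicePost (R.obj Z) p).symm
      (Over.map (a.counit.app Z).left))

end CategoryTheory.Over

/-- distributivity / Beck–Chevalley for pushforwards: pushing forward the
first leg `ev^*(E × E') ⟶ p^*p_*(E × B')` of the generic composite `GenComp(p', p)`
along its second leg `p^*p_*(E × B') ⟶ p_*(E × B')` yields (up to isomorphism over
`p_*(E × B')`) the same morphism `p_*(E × E') ⟶ p_*(E × B')` as applying the polynomial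
functor `P_p` of `p` to the map `p' : E' ⟶ B'`. -/
theorem pushforward_generic_composite_is_polynomial
    {E B E' B' : C} (p : E ⟶ B) [(Over.pullback p).IsLeftAdjoint] (p' : E' ⟶ B')
    (G : Over (pullback (genQ p B').hom p) ⥤ Over ((genQ p B').left))
    (adjG : Over.pullback (pullback.fst (genQ p B').hom p) ⊣ G) :
    Nonempty
      (G.obj (Over.mk (pullback.snd p' (evBase p B'))) ≅
        Over.mk
          (((Over.pullback p).rightAdjoint.map
            (Over.homMk (prod.map (𝟙 E) p') (by simp) :
              (Over.mk (prod.fst : E ⨯ E' ⟶ E)) ⟶ Over.mk (prod.fst : E ⨯ B' ⟶ E))).left)) := by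
  let a := Adjunction.ofIsLeftAdjoint (Over.pullback p)
  let Z := Over.mk (prod.fst : E ⨯ B' ⟶ E)
  let ε := (a.counit.app Z).left
  let e : Over.mk (prod.fst : E ⨯ E' ⟶ E) ⟶ Z := Over.homMk (prod.map (𝟙 E) p') (by simp [Z])
  have distributivity : Over.pullback ε ⋙ G ≅
      Z.iteratedSliceBackward ⋙ Over.post (Over.pullback p).rightAdjoint ⋙
        (genQ p B').iteratedSliceForward :=
    (adjG.comp (Over.mapPullbackAdj ε)).rightAdjointUniq (Over.pullbackFstMapCounitAdj a Z)
  exact ⟨G.mapIso ((Over.pullbackComp ε prod.snd).app (Over.mk p') ≪≫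
      (Over.pullback ε).mapIso (Over.pullbackSndObjIsoProdMap p' E)) ≪≫
    distributivity.app (Over.mk e.left) ≪≫
    (Over.post (Over.pullback p).rightAdjoint ⋙ (genQ p B').iteratedSliceForward).mapIso
      (Over.iteratedSliceBackwardObjMkIso e)⟩

end
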